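/- Let p ∈ (0,1), q := 1 − p, let E be a finite set and let (Y_e)_{e∈E} be i.i.d. random variables with ℙ(Y_e = √(q/p)) = p and ℙ(Y_e = −√(p/q)) = q (so 𝔼Y_e = 0 and 𝔼Y_e² = 1). For a finite set A ⊆ E write Y_A := Π_{a∈A} Y_a. Let Ã₁, Ã₂, Ã₃, Ã₄ ⊆ E and, for k = 1,2,3,4, let B_k := { e ∈ E : e belongs to exactly k of the sets Ã₁, Ã₂, Ã₃, Ã₄ }. Then |𝔼[Y_{Ã₁} Y_{Ã₂} Y_{Ã₃} Y_{Ã₄}]| ≤ 1_{{B₁ = ∅}} · (pq)^{−(|B₃| + 2|B₄|)/2}. -/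

import Mathlib

/-!
By independence the expectation factors as `∏ₑ 𝔼[Y^{mₑ}]`, where `mₑ ≤ 4` is the number of
the sets `Ãᵢ` containing `e`. Since `𝔼Y = 0`, the product vanishes as soon as some `mₑ = 1`.
Otherwise each factor is `1` for `mₑ ∈ {0, 2}`, and for `k ≥ 2`
`|𝔼Y^k| ≤ 𝔼|Y|^k = (pq)^{1 - k/2} (q^{k-1} + p^{k-1}) ≤ (pq)^{-(k-2)/2}` because `p + q = 1`.
-/

open MeasureTheory ProbabilityTheory Finset

section TwoValued

variable {Ω : Type*} [MeasurableSpace Ω] {μ : Measure Ω} [IsProbabilityMeasure μ]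
  {f : Ω → ℝ} {a b : ℝ}

lemma ae_eq_or_eq_of_measure_add_eq_one (hf : Measurable f) (hab : a ≠ b)
    (h : μ {ω | f ω = a} + μ {ω | f ω = b} = 1) : ∀ᵐ ω ∂μ, f ω = a ∨ f ω = b := by
  have hdisj : Disjoint {ω | f ω = a} {ω | f ω = b} :=
    Set.disjoint_left.2 fun ω (ha : f ω = a) (hb : f ω = b) => hab (ha.symm.trans hb)
  have hmeas : MeasurableSet {ω | f ω = a ∨ f ω = b} :=
    (hf (measurableSet_singleton a)).union (hf (measurableSet_singleton b))
  rw [ae_iff_measure_eq hmeas.nullMeasurableSet, measure_univ, Set.ofPred_or,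
    measure_union hdisj (hf (measurableSet_singleton b)), h]

lemma integral_comp_eq_of_measure_add_eq_one (hf : Measurable f) (hab : a ≠ b)
    (h : μ {ω | f ω = a} + μ {ω | f ω = b} = 1) (g : ℝ → ℝ) :
    ∫ ω, g (f ω) ∂μ = g a * μ.real {ω | f ω = a} + g b * μ.real {ω | f ω = b} := by
  have ha : MeasurableSet {ω | f ω = a} := hf (measurableSet_singleton a)
  have hb : MeasurableSet {ω | f ω = b} := hf (measurableSet_singleton b)
  have hae : (fun ω => g (f ω)) =ᵐ[μ]
      {ω | f ω = a}.indicator (fun _ => g a) + {ω | f ω = b}.indicator (fun _ => g b) := by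
    filter_upwards [ae_eq_or_eq_of_measure_add_eq_one hf hab h] with ω hω
    rcases hω with hω | hω <;> simp [hω, hab, hab.symm]
  rw [integral_congr_ae hae, integral_add' ((integrable_const _).indicator ha)
    ((integrable_const _).indicator hb), integral_indicator_const _ ha,
    integral_indicator_const _ hb, smul_eq_mul, smul_eq_mul, mul_comm, mul_comm (μ.real _)]

end TwoValued

lemma abs_div_pow_mul_sq_add_neg_div_pow_mul_sq_le {s t : ℝ} (hs : 0 < s) (ht : 0 < t)
    (hst : s ^ 2 + t ^ 2 = 1) (k : ℕ) :
    |(t / s) ^ (k + 2) * s ^ 2 + (-(s / t)) ^ (k + 2) * t ^ 2| ≤ ((s * t) ^ k)⁻¹ := by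
  have hs1 : s ^ 2 ≤ 1 := by nlinarith
  have ht1 : t ^ 2 ≤ 1 := by nlinarith
  calc |(t / s) ^ (k + 2) * s ^ 2 + (-(s / t)) ^ (k + 2) * t ^ 2|
      ≤ (t / s) ^ (k + 2) * s ^ 2 + (s / t) ^ (k + 2) * t ^ 2 := by
        refine (abs_add_le _ _).trans_eq ?_
        simp only [abs_mul, abs_pow, abs_neg, abs_div, abs_of_pos hs, abs_of_pos ht]
    _ = ((t ^ 2) ^ (k + 1) + (s ^ 2) ^ (k + 1)) / (s * t) ^ k := by
        rw [eq_div_iff (by positivity), div_pow, div_pow]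
        field_simp
        ring
    _ ≤ (t ^ 2 + s ^ 2) / (s * t) ^ k := by
        gcongr
        · exact pow_le_of_le_one (by positivity) ht1 k.succ_ne_zero
        · exact pow_le_of_le_one (by positivity) hs1 k.succ_ne_zero
    _ = ((s * t) ^ k)⁻¹ := by rw [add_comm, hst, one_div]

lemma Real.rpow_neg_natCast_div_two {x : ℝ} (hx : 0 ≤ x) (n : ℕ) :
    x ^ (-(n : ℝ) / 2) = (√x ^ n)⁻¹ := by
  rw [Real.sqrt_eq_rpow, ← Real.rpow_natCast, ← Real.rpow_mul hx, neg_div, Real.rpow_neg hx]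
  ring_nf

lemma Finset.prod_eq_prod_pow_ite {ι M : Type*} [Fintype ι] [DecidableEq ι] [CommMonoid M]
    (A : Finset ι) (f : ι → M) : ∏ a ∈ A, f a = ∏ e, f e ^ (if e ∈ A then 1 else 0) := by
  simp [pow_ite]

lemma Finset.prod_mul_prod_mul_prod_mul_prod_eq_prod_pow {ι M : Type*} [Fintype ι]
    [DecidableEq ι] [CommMonoid M] (A₁ A₂ A₃ A₄ : Finset ι) (f : ι → M) :
    (∏ a ∈ A₁, f a) * (∏ a ∈ A₂, f a) * (∏ a ∈ A₃, f a) * (∏ a ∈ A₄, f a) =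
      ∏ e, f e ^ ((if e ∈ A₁ then 1 else 0) + (if e ∈ A₂ then 1 else 0)
        + (if e ∈ A₃ then 1 else 0) + (if e ∈ A₄ then 1 else 0)) := by
  simp only [prod_eq_prod_pow_ite _ f, ← prod_mul_distrib, ← pow_add]

lemma Finset.sum_tsub_two_eq_card_add_two_mul_card {ι : Type*} [Fintype ι] (m : ι → ℕ)
    (hm : ∀ e, m e ≤ 4) : ∑ e, (m e - 2) = #{e | m e = 3} + 2 * #{e | m e = 4} := by
  rw [card_filter, card_filter, mul_sum, ← sum_add_distrib]
  refine sum_congr rfl fun e _ => ?_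
  have := hm e
  interval_cases m e <;> rfl

noncomputable def rademacherMoment (p : ℝ) (k : ℕ) : ℝ :=
  √((1 - p) / p) ^ k * p + (-√(p / (1 - p))) ^ k * (1 - p)

section Rademacher

variable {p : ℝ}

lemma rademacherMoment_eq (hp : p ∈ Set.Ioo 0 1) (k : ℕ) :
    rademacherMoment p k =
      (√(1 - p) / √p) ^ k * √p ^ 2 + (-(√p / √(1 - p))) ^ k * √(1 - p) ^ 2 := by
  rw [rademacherMoment, Real.sqrt_div (sub_nonneg.2 hp.2.le), Real.sqrt_div hp.1.le,
    Real.sq_sqrt hp.1.le, Real.sq_sqrt (sub_nonneg.2 hp.2.le)]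

lemma rademacherMoment_one (hp : p ∈ Set.Ioo 0 1) : rademacherMoment p 1 = 0 := by
  have hs : 0 < √p := Real.sqrt_pos.2 hp.1
  have ht : 0 < √(1 - p) := Real.sqrt_pos.2 (sub_pos.2 hp.2)
  rw [rademacherMoment_eq hp]
  field_simp
  ring

/-- `k - 2` is truncated subtraction, so for `k = 0` the bound is `1`. -/
lemma abs_rademacherMoment_le (hp : p ∈ Set.Ioo 0 1) {k : ℕ} (hk : k ≠ 1) :
    |rademacherMoment p k| ≤ (√(p * (1 - p)) ^ (k - 2))⁻¹ := by
  obtain rfl | ⟨j, rfl⟩ : k = 0 ∨ ∃ j, k = j + 2 := by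
    rcases k with _ | _ | j
    exacts [Or.inl rfl, absurd rfl hk, Or.inr ⟨j, rfl⟩]
  · simp [rademacherMoment]
  · rw [rademacherMoment_eq hp, Nat.add_sub_cancel, Real.sqrt_mul hp.1.le]
    refine abs_div_pow_mul_sq_add_neg_div_pow_mul_sq_le (Real.sqrt_pos.2 hp.1)
      (Real.sqrt_pos.2 (sub_pos.2 hp.2)) ?_ j
    rw [Real.sq_sqrt hp.1.le, Real.sq_sqrt (sub_nonneg.2 hp.2.le), add_sub_cancel]

lemma abs_prod_rademacherMoment_le {ι : Type*} [Fintype ι] (hp : p ∈ Set.Ioo 0 1)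
    (m : ι → ℕ) (hm : ∀ e, m e ≠ 1) :
    |∏ e, rademacherMoment p (m e)| ≤ (√(p * (1 - p)) ^ ∑ e, (m e - 2))⁻¹ := by
  rw [abs_prod, ← prod_pow_eq_pow_sum, ← prod_inv_distrib]
  exact prod_le_prod (fun e _ => abs_nonneg _) fun e _ => abs_rademacherMoment_le hp (hm e)

variable {Ω : Type*} [MeasurableSpace Ω] {μ : Measure Ω} [IsProbabilityMeasure μ]

lemma integral_pow_eq_rademacherMoment (hp : p ∈ Set.Ioo 0 1) {f : Ω → ℝ} (hf : Measurable f)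
    (hdist : μ {ω | f ω = √((1 - p) / p)} = ENNReal.ofReal p ∧
      μ {ω | f ω = -√(p / (1 - p))} = ENNReal.ofReal (1 - p)) (k : ℕ) :
    ∫ ω, f ω ^ k ∂μ = rademacherMoment p k := by
  have hq : 0 ≤ 1 - p := sub_nonneg.2 hp.2.le
  have hne : √((1 - p) / p) ≠ -√(p / (1 - p)) :=
    ((neg_nonpos.2 (Real.sqrt_nonneg _)).trans_lt
      (Real.sqrt_pos.2 (div_pos (sub_pos.2 hp.2) hp.1))).ne'
  have hsum : μ {ω | f ω = √((1 - p) / p)} + μ {ω | f ω = -√(p / (1 - p))} = 1 := by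
    rw [hdist.1, hdist.2, ← ENNReal.ofReal_add hp.1.le hq, add_sub_cancel, ENNReal.ofReal_one]
  rw [integral_comp_eq_of_measure_add_eq_one hf hne hsum (· ^ k), measureReal_def,
    measureReal_def, hdist.1, hdist.2, ENNReal.toReal_ofReal hp.1.le, ENNReal.toReal_ofReal hq,
    rademacherMoment]

variable {ι : Type*} [Fintype ι] {Y : ι → Ω → ℝ}

lemma integral_prod_pow_eq_prod_rademacherMoment (hp : p ∈ Set.Ioo 0 1)
    (hmeas : ∀ e, Measurable (Y e)) (hindep : iIndepFun Y μ)
    (hdist : ∀ e, μ {ω | Y e ω = √((1 - p) / p)} = ENNReal.ofReal p ∧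
      μ {ω | Y e ω = -√(p / (1 - p))} = ENNReal.ofReal (1 - p)) (m : ι → ℕ) :
    ∫ ω, ∏ e, Y e ω ^ m e ∂μ = ∏ e, rademacherMoment p (m e) := by
  rw [hindep.integral_fun_prod_comp (f := fun e x => x ^ m e) (fun e => (hmeas e).aemeasurable)
    (fun e => (continuous_pow _).aestronglyMeasurable)]
  exact prod_congr rfl fun e _ => integral_pow_eq_rademacherMoment hp (hmeas e) (hdist e) (m e)

lemma abs_integral_prod_pow_le (hp : p ∈ Set.Ioo 0 1)
    (hmeas : ∀ e, Measurable (Y e)) (hindep : iIndepFun Y μ)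
    (hdist : ∀ e, μ {ω | Y e ω = √((1 - p) / p)} = ENNReal.ofReal p ∧
      μ {ω | Y e ω = -√(p / (1 - p))} = ENNReal.ofReal (1 - p))
    (m : ι → ℕ) (hm : ∀ e, m e ≤ 4) :
    |∫ ω, ∏ e, Y e ω ^ m e ∂μ|
      ≤ (if ∀ e, ¬ m e = 1 then (p * (1 - p)) ^
            (-((Nat.card {e // m e = 3} + 2 * Nat.card {e // m e = 4} : ℕ) : ℝ) / 2)
          else 0) := by
  rw [integral_prod_pow_eq_prod_rademacherMoment hp hmeas hindep hdist]
  split_ifs with hm1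
  · rw [Nat.card_eq_fintype_card, Nat.card_eq_fintype_card, Fintype.card_subtype,
      Fintype.card_subtype, ← sum_tsub_two_eq_card_add_two_mul_card m hm,
      Real.rpow_neg_natCast_div_two (mul_nonneg hp.1.le (sub_nonneg.2 hp.2.le))]
    exact abs_prod_rademacherMoment_le hp m hm1
  · obtain ⟨e, he⟩ := not_forall_not.1 hm1
    rw [prod_eq_zero (mem_univ e) (by rw [he, rademacherMoment_one hp]), abs_zero]

end Rademacher

/-- let `(Y_e)_{e∈E}` be i.i.d. normalized Rademacher variables with parameter
`p` and, for `k = 1,2,3,4`, let `B_k` be the set of indices belonging to exactly `k` of the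
sets `Ã₁, Ã₂, Ã₃, Ã₄`. Then
`|𝔼[Y_{Ã₁} Y_{Ã₂} Y_{Ã₃} Y_{Ã₄}]| ≤ 1_{B₁ = ∅} · (pq)^{-(|B₃| + 2|B₄|)/2}`. -/
theorem abs_integral_prod_rademacher_le
    {ι : Type*} [Fintype ι] [DecidableEq ι]
    {Ω : Type*} [MeasurableSpace Ω] (μ : Measure Ω) [IsProbabilityMeasure μ]
    (p : ℝ) (hp : p ∈ Set.Ioo (0 : ℝ) 1)
    (Y : ι → Ω → ℝ) (hmeas : ∀ e, Measurable (Y e))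
    (hindep : iIndepFun Y μ)
    (hdist : ∀ e, μ {ω | Y e ω = Real.sqrt ((1 - p) / p)} = ENNReal.ofReal p ∧
      μ {ω | Y e ω = -Real.sqrt (p / (1 - p))} = ENNReal.ofReal (1 - p))
    (A₁ A₂ A₃ A₄ : Finset ι) :
    |∫ ω, (∏ a ∈ A₁, Y a ω) * (∏ a ∈ A₂, Y a ω) * (∏ a ∈ A₃, Y a ω) * (∏ a ∈ A₄, Y a ω) ∂μ|
      ≤ (if ∀ e : ι,
            ¬ ((if e ∈ A₁ then 1 else 0) + (if e ∈ A₂ then 1 else 0)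
              + (if e ∈ A₃ then 1 else 0) + (if e ∈ A₄ then (1 : ℕ) else 0) = 1)
          then (p * (1 - p)) ^
            (-((Nat.card {e : ι // (if e ∈ A₁ then 1 else 0) + (if e ∈ A₂ then 1 else 0)
                  + (if e ∈ A₃ then 1 else 0) + (if e ∈ A₄ then (1 : ℕ) else 0) = 3}
              + 2 * Nat.card {e : ι // (if e ∈ A₁ then 1 else 0) + (if e ∈ A₂ then 1 else 0)
                  + (if e ∈ A₃ then 1 else 0) + (if e ∈ A₄ then (1 : ℕ) else 0) = 4} : ℕ) : ℝ)
              / 2)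
          else 0) := by
  have hcount : ∀ e, (if e ∈ A₁ then 1 else 0) + (if e ∈ A₂ then 1 else 0)
      + (if e ∈ A₃ then 1 else 0) + (if e ∈ A₄ then 1 else 0) ≤ 4 := fun e => by
    split_ifs <;> norm_num
  simp_rw [prod_mul_prod_mul_prod_mul_prod_eq_prod_pow]
  exact abs_integral_prod_pow_le hp hmeas hindep hdist _ hcount
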